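/- arXiv:1610.03025 — 2 statements merged into one kernel-verified Lean document; each statement's English description precedes it below -/
import Mathlib

section
/- Suppose (U^n) and (V^n) both solve the implicit upwind scheme (with the same f⁺, f⁻, δ). Assume that for every n ∈ ℕ the sequence j ↦ |U^n_j − V^n_j| is summable over ℤ, and that for every n ∈ ℕ the sequences j ↦ |f⁺(U^n_j) − f⁺(V^n_j)| and j ↦ |f⁻(U^n_j) − f⁻(V^n_j)| are summable over ℤ. Then the implicit upwind scheme is unconditionally ℓ¹ contracting: for every n ∈ ℕ, Σ_{j∈ℤ} |U^n_j − V^n_j| ≤ Σ_{j∈ℤ} |U^0_j − V^0_j|, with no CFL condition on τ and h. -/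
/-!
The weights `c^{n+1}_k` are nonnegative (concavity of `x ↦ x ^ (1 - α)`) and sum to one
(they telescope), so the history term `Σ_k c^{n+1}_k (U^k - V^k)` has `ℓ¹` norm at most a convex
combination of the earlier distances `‖U^k - V^k‖₁`. The difference `w = U^{n+1} - V^{n+1}` solves
a conservative scheme whose fluxes `f⁺(U) - f⁺(V)` and `f⁻(U) - f⁻(V)` have the sign of `w` and the
opposite sign, respectively, by monotonicity of `f±`. Multiplying by `sign w_j` and summing over `j`,
the implicit fluxes can only decrease the `ℓ¹` norm, whatever `δ ≥ 0`; induction on `n` concludes.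
-/

open scoped BigOperators

/-- The L1 coefficients `c^{n+1}_k` for the discrete Caputo derivative:
`c^{n+1}_0 = (n+1)^{1-α} - n^{1-α}` and, for `1 ≤ k ≤ n`,
`c^{n+1}_k = 2(n+1-k)^{1-α} - (n+2-k)^{1-α} - (n-k)^{1-α}`. -/
noncomputable def caputoCoeff (α : ℝ) (n k : ℕ) : ℝ :=
  if k = 0 then ((n : ℝ) + 1) ^ (1 - α) - (n : ℝ) ^ (1 - α)
  else 2 * ((n : ℝ) + 1 - (k : ℝ)) ^ (1 - α) - ((n : ℝ) + 2 - (k : ℝ)) ^ (1 - α)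
    - ((n : ℝ) - (k : ℝ)) ^ (1 - α)

/-- `U` solves the implicit upwind scheme with time steps indexed by `ℕ`
and space indexed by `ℤ`. -/
def SolvesImplicitScheme (α δ : ℝ) (fp fm : ℝ → ℝ) (U : ℕ → ℤ → ℝ) : Prop :=
  ∀ (n : ℕ) (j : ℤ),
    U (n + 1) j = (∑ k ∈ Finset.range (n + 1), caputoCoeff α n k * U k j)
      - δ * (fp (U (n + 1) j) - fp (U (n + 1) (j - 1)))
      - δ * (fm (U (n + 1) (j + 1)) - fm (U (n + 1) j))

lemma caputoCoeff_nonneg {α : ℝ} (hα : α ∈ Set.Icc (0 : ℝ) 1) {n k : ℕ} (hk : k ≤ n) :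
    0 ≤ caputoCoeff α n k := by
  obtain ⟨hα0, hα1⟩ := hα
  unfold caputoCoeff
  split_ifs with hk0
  · have := Real.rpow_le_rpow (Nat.cast_nonneg n) (le_add_of_nonneg_right zero_le_one)
      (sub_nonneg.2 hα1)
    linarith
  · -- midpoint concavity of `x ↦ x ^ (1 - α)` at `n - k`, `n + 1 - k`, `n + 2 - k`
    have hkn : (k : ℝ) ≤ n := by exact_mod_cast hk
    have hc := (Real.concaveOn_rpow (sub_nonneg.2 hα1) (by linarith)).2
      (x := n - k) (y := n + 2 - k) (Set.mem_Ici.2 (by linarith)) (Set.mem_Ici.2 (by linarith))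
      (by norm_num : (0 : ℝ) ≤ 1 / 2) (by norm_num : (0 : ℝ) ≤ 1 / 2) (by norm_num)
    simp only [smul_eq_mul] at hc
    rw [show (1 : ℝ) / 2 * (n - k) + 1 / 2 * (n + 2 - k) = n + 1 - k by ring] at hc
    linarith

lemma caputoCoeff_sum_eq_one {α : ℝ} (hα : α ≠ 1) (n : ℕ) :
    ∑ k ∈ Finset.range (n + 1), caputoCoeff α n k = 1 := by
  set F : ℕ → ℝ := fun i => ((n : ℝ) + 1 - i) ^ (1 - α) - ((n : ℝ) - i) ^ (1 - α) with hF
  have hsucc : ∀ i, caputoCoeff α n (i + 1) = F (i + 1) - F i := by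
    intro i
    simp only [caputoCoeff, hF, Nat.add_one_ne_zero, if_false]
    push_cast
    ring_nf
  have hFn : F n = 1 := by
    simp [hF, Real.zero_rpow (sub_ne_zero.2 hα.symm)]
  rw [Finset.sum_range_succ', Finset.sum_congr rfl fun i _ => hsucc i, Finset.sum_range_sub F,
    hFn]
  simp [caputoCoeff, hF]

lemma Monotone.sign_sub_mul_sub {f : ℝ → ℝ} (hf : Monotone f) (u v : ℝ) :
    (SignType.sign (u - v) : ℝ) * (f u - f v) = |f u - f v| := by
  rcases lt_trichotomy u v with huv | rfl | huv
  · rw [sign_neg (sub_neg.2 huv), abs_of_nonpos (sub_nonpos.2 (hf huv.le))]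
    simp
  · simp
  · rw [sign_pos (sub_pos.2 huv), abs_of_nonneg (sub_nonneg.2 (hf huv.le))]
    simp

lemma Antitone.sign_sub_mul_sub {f : ℝ → ℝ} (hf : Antitone f) (u v : ℝ) :
    (SignType.sign (u - v) : ℝ) * (f u - f v) = -|f u - f v| := by
  rcases lt_trichotomy u v with huv | rfl | huv
  · rw [sign_neg (sub_neg.2 huv), abs_of_nonneg (sub_nonneg.2 (hf huv.le))]
    simp
  · simp
  · rw [sign_pos (sub_pos.2 huv), abs_of_nonpos (sub_nonpos.2 (hf huv.le))]
    simp

lemma mul_le_abs_of_abs_le_one {σ : ℝ} (hσ : |σ| ≤ 1) (x : ℝ) : σ * x ≤ |x| :=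
  (le_abs_self _).trans <| by
    rw [abs_mul]; exact mul_le_of_le_one_left (abs_nonneg x) hσ

lemma tsum_abs_le_of_upwind {w a p m : ℤ → ℝ} {δ : ℝ} (hδ : 0 ≤ δ)
    (heq : ∀ j, w j = a j - δ * (p j - p (j - 1)) - δ * (m (j + 1) - m j))
    (hp : ∀ j, (SignType.sign (w j) : ℝ) * p j = |p j|)
    (hm : ∀ j, (SignType.sign (w j) : ℝ) * m j = -|m j|)
    (hw : Summable fun j => |w j|) (ha : Summable fun j => |a j|)
    (hps : Summable fun j => |p j|) (hms : Summable fun j => |m j|) :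
    ∑' j, |w j| ≤ ∑' j, |a j| := by
  have hpoint :
      ∀ j, |w j| + δ * |p j| + δ * |m j| ≤ |a j| + δ * |p (j - 1)| + δ * |m (j + 1)| := by
    intro j
    have hw_sign := sign_mul_self (w j)
    have hp_sign := hp j
    have hm_sign := hm j
    set σ : ℝ := ↑(SignType.sign (w j))
    have hσ : |σ| ≤ 1 := by
      rcases SignType.trichotomy (SignType.sign (w j)) with h | h | h <;> simp [σ, h]
    have hcomb : |w j| + δ * |p j| + δ * |m j|
        = σ * a j + δ * (σ * p (j - 1)) + δ * (σ * -m (j + 1)) := by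
      linear_combination -hw_sign + σ * heq j - δ * hp_sign + δ * hm_sign
    rw [hcomb]
    gcongr
    · exact mul_le_abs_of_abs_le_one hσ _
    · exact mul_le_abs_of_abs_le_one hσ _
    · rw [← abs_neg (m (j + 1))]; exact mul_le_abs_of_abs_le_one hσ _
  have hps' : Summable fun j => |p (j - 1)| := (Equiv.subRight (1 : ℤ)).summable_iff.2 hps
  have hms' : Summable fun j => |m (j + 1)| := (Equiv.addRight (1 : ℤ)).summable_iff.2 hms
  have hshift_p : ∑' j, |p (j - 1)| = ∑' j, |p j| := (Equiv.subRight (1 : ℤ)).tsum_eq (|p ·|)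
  have hshift_m : ∑' j, |m (j + 1)| = ∑' j, |m j| := (Equiv.addRight (1 : ℤ)).tsum_eq (|m ·|)
  have hsum := Summable.tsum_le_tsum hpoint
    ((hw.add (hps.mul_left δ)).add (hms.mul_left δ))
    ((ha.add (hps'.mul_left δ)).add (hms'.mul_left δ))
  rw [Summable.tsum_add (hw.add (hps.mul_left δ)) (hms.mul_left δ),
    Summable.tsum_add hw (hps.mul_left δ),
    Summable.tsum_add (ha.add (hps'.mul_left δ)) (hms'.mul_left δ),
    Summable.tsum_add ha (hps'.mul_left δ), tsum_mul_left, tsum_mul_left, tsum_mul_left,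
    tsum_mul_left, hshift_p, hshift_m] at hsum
  linarith

lemma tsum_abs_sum_mul_le {ι β : Type*} {s : Finset ι} {c : ι → ℝ} (hc : ∀ k ∈ s, 0 ≤ c k)
    {x : ι → β → ℝ} (hx : ∀ k ∈ s, Summable fun j => |x k j|) :
    ∑' j, |∑ k ∈ s, c k * x k j| ≤ ∑ k ∈ s, c k * ∑' j, |x k j| := by
  have hbound : ∀ j, |∑ k ∈ s, c k * x k j| ≤ ∑ k ∈ s, c k * |x k j| := fun j =>
    (Finset.abs_sum_le_sum_abs _ _).trans_eq <|
      Finset.sum_congr rfl fun k hk => by rw [abs_mul, abs_of_nonneg (hc k hk)]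
  calc ∑' j, |∑ k ∈ s, c k * x k j|
      ≤ ∑' j, ∑ k ∈ s, c k * |x k j| :=
        Summable.tsum_le_tsum hbound
          (summable_sum fun k hk => ((hx k hk).of_abs.mul_left (c k))).abs
          (summable_sum fun k hk => (hx k hk).mul_left (c k))
    _ = ∑ k ∈ s, c k * ∑' j, |x k j| := by
      rw [Summable.tsum_finsetSum fun k hk => (hx k hk).mul_left (c k)]
      exact Finset.sum_congr rfl fun k _ => tsum_mul_left

lemma le_apply_zero_of_succ_le_convex_comb {e : ℕ → ℝ} {c : ℕ → ℕ → ℝ}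
    (hc : ∀ n k, k ≤ n → 0 ≤ c n k) (hc_sum : ∀ n, ∑ k ∈ Finset.range (n + 1), c n k = 1)
    (he : ∀ n, e (n + 1) ≤ ∑ k ∈ Finset.range (n + 1), c n k * e k) (n : ℕ) : e n ≤ e 0 := by
  induction n using Nat.strong_induction_on with
  | _ n ih =>
    cases n with
    | zero => exact le_rfl
    | succ n =>
      calc e (n + 1) ≤ ∑ k ∈ Finset.range (n + 1), c n k * e k := he n
        _ ≤ ∑ k ∈ Finset.range (n + 1), c n k * e 0 := by
          refine Finset.sum_le_sum fun k hk => ?_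
          have hkn := Finset.mem_range_succ_iff.1 hk
          exact mul_le_mul_of_nonneg_left (ih k (Nat.lt_succ_of_le hkn)) (hc n k hkn)
        _ = e 0 := by rw [← Finset.sum_mul, hc_sum, one_mul]

lemma SolvesImplicitScheme.tsum_abs_sub_succ_le {α δ : ℝ} (hα : α ∈ Set.Icc (0 : ℝ) 1)
    (hδ : 0 ≤ δ) {fp fm : ℝ → ℝ} (hfp : Monotone fp) (hfm : Antitone fm) {U V : ℕ → ℤ → ℝ}
    (hU : SolvesImplicitScheme α δ fp fm U) (hV : SolvesImplicitScheme α δ fp fm V)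
    (hsum : ∀ n : ℕ, Summable (fun j : ℤ => |U n j - V n j|)) {n : ℕ}
    (hfpsum : Summable (fun j : ℤ => |fp (U (n + 1) j) - fp (V (n + 1) j)|))
    (hfmsum : Summable (fun j : ℤ => |fm (U (n + 1) j) - fm (V (n + 1) j)|)) :
    ∑' j, |U (n + 1) j - V (n + 1) j|
      ≤ ∑ k ∈ Finset.range (n + 1), caputoCoeff α n k * ∑' j, |U k j - V k j| := by
  have hc : ∀ k ∈ Finset.range (n + 1), 0 ≤ caputoCoeff α n k := fun k hk =>
    caputoCoeff_nonneg hα (Finset.mem_range_succ_iff.1 hk)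
  refine le_trans ?_ (tsum_abs_sum_mul_le hc fun k _ => hsum k)
  refine tsum_abs_le_of_upwind hδ (fun j => ?_)
    (fun j => hfp.sign_sub_mul_sub _ _) (fun j => hfm.sign_sub_mul_sub _ _) (hsum (n + 1))
    (summable_sum fun k _ => (hsum k).of_abs.mul_left _).abs hfpsum hfmsum
  simp only [mul_sub, Finset.sum_sub_distrib]
  linear_combination hU n j - hV n j

/-- the implicit upwind scheme is unconditionally `ℓ¹` contracting:
`Σ_j |U^n_j - V^n_j| ≤ Σ_j |U^0_j - V^0_j|` for all `n`, with no CFL condition. -/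
theorem implicit_upwind_l1_contracting (α τ h : ℝ) (hα : α ∈ Set.Ioo (0 : ℝ) 1)
    (hτ : 0 < τ) (hh : 0 < h) (δ : ℝ) (hδ : δ = τ ^ α / (h * Real.Gamma (2 - α)))
    (fp fm : ℝ → ℝ) (hfp : Differentiable ℝ fp) (hfm : Differentiable ℝ fm)
    (hfp' : ∀ x, 0 ≤ deriv fp x) (hfm' : ∀ x, deriv fm x ≤ 0)
    (U V : ℕ → ℤ → ℝ)
    (hU : SolvesImplicitScheme α δ fp fm U) (hV : SolvesImplicitScheme α δ fp fm V)
    (hsum : ∀ n : ℕ, Summable (fun j : ℤ => |U n j - V n j|))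
    (hfpsum : ∀ n : ℕ, Summable (fun j : ℤ => |fp (U n j) - fp (V n j)|))
    (hfmsum : ∀ n : ℕ, Summable (fun j : ℤ => |fm (U n j) - fm (V n j)|)) :
    ∀ n : ℕ, ∑' j : ℤ, |U n j - V n j| ≤ ∑' j : ℤ, |U 0 j - V 0 j| := by
  have hδ0 : 0 ≤ δ := by
    have hΓ : 0 < Real.Gamma (2 - α) := Real.Gamma_pos_of_pos (by linarith [hα.2])
    rw [hδ]
    exact div_nonneg (Real.rpow_pos_of_pos hτ α).le (mul_pos hh hΓ).le
  have hα' : α ∈ Set.Icc (0 : ℝ) 1 := Set.Ioo_subset_Icc_self hα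
  exact le_apply_zero_of_succ_le_convex_comb (fun n k hk => caputoCoeff_nonneg hα' hk)
    (caputoCoeff_sum_eq_one hα.2.ne)
    (fun n => hU.tsum_abs_sub_succ_le hα' hδ0 (monotone_of_deriv_nonneg hfp hfp')
      (antitone_of_deriv_nonpos hfm hfm') hV hsum (hfpsum (n + 1)) (hfmsum (n + 1)))
end

section
/- Suppose (U^n) solves the implicit upwind scheme for linear advection with λ > 0, and let η : ℝ → ℝ be convex. Then for every n ∈ ℕ and j ∈ ℤ the pointwise entropy inequality holds: η(U^{n+1}_j) ≤ Σ_{k=0}^{n} (c^{n+1}_k/(1+λ)) η(U^k_j) + (λ/(1+λ)) η(U^{n+1}_{j−1}). (The inequality is Jensen's inequality applied to the convex-combination form U^{n+1}_j = Σ_{k=0}^{n} (c^{n+1}_k/(1+λ)) U^k_j + (λ/(1+λ)) U^{n+1}_{j−1}, whose weights are positive and sum to 1.) -/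
open scoped BigOperators

/-- `U` solves the implicit upwind scheme for the linear advection equation
with flux `f(u) = a u`, `a > 0`, where `lam = a τ^α / (h Γ(2-α))`. -/
def SolvesImplicitAdvection (α lam : ℝ) (U : ℕ → ℤ → ℝ) : Prop :=
  ∀ (n : ℕ) (j : ℤ),
    U (n + 1) j = (∑ k ∈ Finset.range (n + 1), caputoCoeff α n k * U k j)
      - lam * (U (n + 1) j - U (n + 1) (j - 1))

open Finset

/-!
The scheme says `(1 + λ) U^{n+1}_j = ∑ₖ cₖ U^k_j + λ U^{n+1}_{j-1}`. For `k ≥ 1`, `cₖ` is a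
negated second difference of the strictly concave `t ↦ t^{1-α}`, hence positive; the `cₖ`
telescope to `∑ₖ cₖ = 1`; and `λ ≥ 0`. So `U^{n+1}_j` is a convex combination of
`U^0_j, …, U^n_j, U^{n+1}_{j-1}`, and Jensen's inequality applies in two steps: first to the pair
(history `∑ₖ cₖ U^k_j`, neighbour `U^{n+1}_{j-1}`), then inside the history.
-/

lemma two_mul_rpow_sub_rpow_sub_rpow_pos {p x : ℝ} (hp0 : 0 < p) (hp1 : p < 1) (hx : 0 ≤ x) :
    0 < 2 * (x + 1) ^ p - (x + 2) ^ p - x ^ p := by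
  have hmid := (Real.strictConcaveOn_rpow hp0 hp1).2 (Set.mem_Ici.2 hx)
    (Set.mem_Ici.2 (by linarith : (0 : ℝ) ≤ x + 2)) (by linarith : x ≠ x + 2)
    (by norm_num : (0 : ℝ) < 1 / 2) (by norm_num : (0 : ℝ) < 1 / 2) (by norm_num)
  have hx1 : (1 / 2 : ℝ) • x + (1 / 2 : ℝ) • (x + 2) = x + 1 := by
    simp only [smul_eq_mul]; ring
  rw [hx1] at hmid
  simp only [smul_eq_mul] at hmid
  linarith

lemma caputoCoeff_zero (α : ℝ) (n : ℕ) :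
    caputoCoeff α n 0 = ((n : ℝ) + 1) ^ (1 - α) - (n : ℝ) ^ (1 - α) := by
  simp [caputoCoeff]

lemma caputoCoeff_succ (α : ℝ) (n k : ℕ) :
    caputoCoeff α n (k + 1) = 2 * ((n : ℝ) - k) ^ (1 - α) - ((n : ℝ) + 1 - k) ^ (1 - α)
      - ((n : ℝ) - (k + 1)) ^ (1 - α) := by
  simp only [caputoCoeff, Nat.succ_ne_zero, if_false]
  push_cast
  ring_nf

lemma caputoCoeff_pos {α : ℝ} (hα : α ∈ Set.Ioo (0 : ℝ) 1) {n k : ℕ} (hk : k ≤ n) :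
    0 < caputoCoeff α n k := by
  obtain ⟨hα0, hα1⟩ := hα
  cases k with
  | zero =>
    rw [caputoCoeff_zero, sub_pos]
    exact Real.rpow_lt_rpow n.cast_nonneg (lt_add_one _) (by linarith)
  | succ k =>
    have hx : (0 : ℝ) ≤ n - (k + 1) := by
      rw [sub_nonneg]; exact_mod_cast hk
    have h := two_mul_rpow_sub_rpow_sub_rpow_pos (by linarith : 0 < 1 - α) (by linarith) hx
    rw [caputoCoeff_succ]
    convert h using 3 <;> ring_nf

lemma sum_caputoCoeff {α : ℝ} (hα : α < 1) (n : ℕ) :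
    ∑ k ∈ range (n + 1), caputoCoeff α n k = 1 := by
  set b : ℕ → ℝ := fun k => ((n : ℝ) + 1 - k) ^ (1 - α) - ((n : ℝ) - k) ^ (1 - α)
  have hsucc (k : ℕ) : caputoCoeff α n (k + 1) = b (k + 1) - b k := by
    rw [caputoCoeff_succ]; simp only [b]; push_cast; ring_nf
  have hb0 : b 0 = caputoCoeff α n 0 := by simp [b, caputoCoeff_zero]
  have hbn : b n = 1 := by simp [b, Real.zero_rpow (by linarith : 1 - α ≠ 0)]
  rw [sum_range_succ', sum_congr rfl fun k _ => hsucc k, sum_range_sub, hbn, ← hb0]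
  ring

theorem ConvexOn.map_le_of_one_add_smul_eq {E ι : Type*} [AddCommGroup E] [Module ℝ E]
    {s : Set E} {η : E → ℝ} (hη : ConvexOn ℝ s η) {t : Finset ι} {c : ι → ℝ} {x : ι → E}
    {y z : E} {lam : ℝ} (hc0 : ∀ i ∈ t, 0 ≤ c i) (hc1 : ∑ i ∈ t, c i = 1) (hlam : 0 ≤ lam)
    (hx : ∀ i ∈ t, x i ∈ s) (hy : y ∈ s) (hz : (1 + lam) • z = ∑ i ∈ t, c i • x i + lam • y) :
    η z ≤ ∑ i ∈ t, c i / (1 + lam) * η (x i) + lam / (1 + lam) * η y := by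
  set m := ∑ i ∈ t, c i • x i
  have h1lam : 0 < 1 + lam := by linarith
  have hz' : z = (1 / (1 + lam)) • m + (lam / (1 + lam)) • y := by
    rw [div_eq_inv_mul, div_eq_inv_mul, mul_one, mul_smul, ← smul_add, ← hz,
      inv_smul_smul₀ h1lam.ne']
  have hstep := hη.2 (hη.1.sum_mem hc0 hc1 hx) hy (by positivity : 0 ≤ 1 / (1 + lam))
    (by positivity : 0 ≤ lam / (1 + lam)) (by field_simp)
  have hm := hη.map_sum_le hc0 hc1 hx
  rw [← hz'] at hstep
  simp only [smul_eq_mul] at hstep hm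
  calc η z ≤ 1 / (1 + lam) * η m + lam / (1 + lam) * η y := hstep
    _ ≤ 1 / (1 + lam) * ∑ i ∈ t, c i * η (x i) + lam / (1 + lam) * η y := by gcongr
    _ = _ := by rw [mul_sum]; congr 1; exact sum_congr rfl fun i _ => by ring

theorem SolvesImplicitAdvection.one_add_mul_eq {α lam : ℝ} {U : ℕ → ℤ → ℝ}
    (hU : SolvesImplicitAdvection α lam U) (n : ℕ) (j : ℤ) :
    (1 + lam) * U (n + 1) j
      = ∑ k ∈ range (n + 1), caputoCoeff α n k * U k j + lam * U (n + 1) (j - 1) := by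
  linarith [hU n j]

/-- pointwise entropy inequality (Jensen) for the implicit upwind scheme
for linear advection: for convex `η`,
`η(U^{n+1}_j) ≤ Σ_{k=0}^n (c^{n+1}_k/(1+λ)) η(U^k_j) + (λ/(1+λ)) η(U^{n+1}_{j-1})`. -/
theorem implicit_advection_pointwise_entropy (α τ h a : ℝ)
    (hα : α ∈ Set.Ioo (0 : ℝ) 1) (hτ : 0 < τ) (hh : 0 < h) (ha : 0 < a)
    (lam : ℝ) (hlam : lam = a * τ ^ α / (h * Real.Gamma (2 - α)))
    (U : ℕ → ℤ → ℝ) (hU : SolvesImplicitAdvection α lam U)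
    (η : ℝ → ℝ) (hη : ConvexOn ℝ Set.univ η) :
    ∀ (n : ℕ) (j : ℤ),
      η (U (n + 1) j)
        ≤ (∑ k ∈ Finset.range (n + 1), caputoCoeff α n k / (1 + lam) * η (U k j))
          + lam / (1 + lam) * η (U (n + 1) (j - 1)) := by
  have hlam0 : 0 ≤ lam := by
    have := Real.Gamma_pos_of_pos (by linarith [hα.2] : 0 < 2 - α)
    have := Real.rpow_pos_of_pos hτ α
    rw [hlam]; positivity
  intro n j
  have hc0 : ∀ k ∈ range (n + 1), 0 ≤ caputoCoeff α n k := fun k hk =>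
    (caputoCoeff_pos hα (Nat.lt_succ_iff.1 (mem_range.1 hk))).le
  exact hη.map_le_of_one_add_smul_eq hc0 (sum_caputoCoeff hα.2 n) hlam0
    (fun _ _ => trivial) trivial (hU.one_add_mul_eq n j)
end
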